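/- Reduction Theorem for Orthogonal Subspaces: Let ρ1, ρ2 be density matrices on a finite-dimensional complex inner product space H, with a priori probabilities p1, p2 > 0, p1 + p2 = 1. Assume support(ρ1) ∩ support(ρ2) = {0} and support(ρ1) + support(ρ2) = H. Set S1⊥ = support(ρ1)⊥ ∩ support(ρ2), S2⊥ = support(ρ2)⊥ ∩ support(ρ1), let Π' be the orthogonal projection onto the orthogonal complement H' of S1⊥ + S2⊥ in H, assume N_i = Tr(ρ_i Π') > 0 and set ρ'_i = Π' ρ_i Π' / N_i, N = N1 p1 + N2 p2, p'_i = N_i p_i / N. Then the infimum of the failure probability over all USD POVMs for (ρ1, ρ2) with a priori probabilities (p1, p2) equals N times the infimum of the failure probability over all USD POVMs for (ρ'1, ρ'2) with a priori probabilities (p'1, p'2). -/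

import Mathlib

open Matrix ComplexOrder

noncomputable section

abbrev Mat (n : ℕ) := Matrix (Fin n) (Fin n) ℂ

/-- The support (range) of a matrix, viewed as an operator on Euclidean space. -/
def MatSupport {n : ℕ} (A : Mat n) : Submodule ℂ (EuclideanSpace ℂ (Fin n)) :=
  LinearMap.range (Matrix.toEuclideanLin A)

/-- The matrix of the orthogonal projection onto a subspace of Euclidean space. -/
def projMat {n : ℕ} (K : Submodule ℂ (EuclideanSpace ℂ (Fin n))) : Mat n :=
  Matrix.toEuclideanLin.symm (K.subtype ∘ₗ (K.orthogonalProjection).toLinearMap)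

/-- A density matrix: positive semidefinite (hence Hermitian) with trace one. -/
def IsDensity {n : ℕ} (ρ : Mat n) : Prop := ρ.PosSemidef ∧ ρ.trace = 1

/-- A USD POVM for the pair (ρ1, ρ2). -/
def IsUSD {n : ℕ} (ρ1 ρ2 F1 F2 Fq : Mat n) : Prop :=
  F1.PosSemidef ∧ F2.PosSemidef ∧ Fq.PosSemidef ∧ F1 + F2 + Fq = 1 ∧
  (ρ1 * F2).trace = 0 ∧ (ρ2 * F1).trace = 0

/-- Failure probability of a USD POVM with inconclusive element `Fq`. -/
def failQ {n : ℕ} (p1 p2 : ℝ) (ρ1 ρ2 Fq : Mat n) : ℝ :=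
  p1 * ((ρ1 * Fq).trace).re + p2 * ((ρ2 * Fq).trace).re



section AuxLemmas

open scoped MatrixOrder in
def Matrix.PosSemidef.sqrt {n : ℕ} {A : Mat n} (_ : A.PosSemidef) : Mat n := CFC.sqrt A

open scoped MatrixOrder in
lemma Matrix.PosSemidef.posSemidef_sqrt {n : ℕ} {A : Mat n} (hA : A.PosSemidef) :
    hA.sqrt.PosSemidef :=
  (CFC.sqrt_nonneg A).posSemidef

open scoped MatrixOrder in
lemma Matrix.PosSemidef.sqrt_mul_self {n : ℕ} {A : Mat n} (hA : A.PosSemidef) :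
    hA.sqrt * hA.sqrt = A :=
  CFC.sqrt_mul_sqrt_self A hA.nonneg

lemma psd_add {n : ℕ} {A B : Mat n} (hA : A.PosSemidef) (hB : B.PosSemidef) :
    (A + B).PosSemidef := by
  refine posSemidef_iff_dotProduct_mulVec.mpr ⟨hA.1.add hB.1, fun x => ?_⟩
  rw [add_mulVec, dotProduct_add]
  exact add_nonneg ((posSemidef_iff_dotProduct_mulVec.mp hA).2 x)
    ((posSemidef_iff_dotProduct_mulVec.mp hB).2 x)

lemma psd_smul_real {n : ℕ} {A : Mat n} (hA : A.PosSemidef) {r : ℝ} (hr : 0 ≤ r) :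
    ((r : ℂ) • A).PosSemidef := by
  refine posSemidef_iff_dotProduct_mulVec.mpr ⟨?_, fun x => ?_⟩
  · unfold Matrix.IsHermitian
    rw [conjTranspose_smul, hA.1]
    norm_num
  · rw [smul_mulVec, dotProduct_smul, smul_eq_mul]
    exact mul_nonneg (by exact_mod_cast hr) ((posSemidef_iff_dotProduct_mulVec.mp hA).2 x)

lemma trace_conjTranspose_mul_self_re {n : ℕ} (M : Mat n) :
    ((Mᴴ * M).trace) = ((∑ j, ∑ i, Complex.normSq (M i j) : ℝ) : ℂ) := by
  rw [Matrix.trace]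
  push_cast
  congr 1; ext j
  rw [Matrix.diag_apply, Matrix.mul_apply]
  congr 1; ext i
  rw [Matrix.conjTranspose_apply, Complex.normSq_eq_conj_mul_self]
  rfl

lemma eq_zero_of_trace_conjTranspose_mul_self {n : ℕ} {M : Mat n}
    (h : (Mᴴ * M).trace = 0) : M = 0 := by
  rw [trace_conjTranspose_mul_self_re] at h
  have h2 : (∑ j, ∑ i, Complex.normSq (M i j) : ℝ) = 0 := by exact_mod_cast h
  have h3 : ∀ j ∈ Finset.univ, ∀ i ∈ (Finset.univ : Finset (Fin n)),
      Complex.normSq (M i j) = 0 := by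
    have := (Finset.sum_eq_zero_iff_of_nonneg (fun j _ =>
      Finset.sum_nonneg (fun i _ => Complex.normSq_nonneg _))).mp h2
    intro j hj i hi
    exact (Finset.sum_eq_zero_iff_of_nonneg (fun i _ => Complex.normSq_nonneg _)).mp
      (this j hj) i hi
  ext i j
  simpa using Complex.normSq_eq_zero.mp (h3 j (Finset.mem_univ j) i (Finset.mem_univ i))

lemma trace_psd_mul_eq {n : ℕ} {A B : Mat n} (hA : A.PosSemidef) (hB : B.PosSemidef) :
    (A * B).trace = (((hB.sqrt * hA.sqrt)ᴴ) * (hB.sqrt * hA.sqrt)).trace := by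
  have hsA : hA.sqrt ᴴ = hA.sqrt := hA.posSemidef_sqrt.1
  have hsB : hB.sqrt ᴴ = hB.sqrt := hB.posSemidef_sqrt.1
  rw [conjTranspose_mul, hsA, hsB]
  calc (A * B).trace = (hA.sqrt * (hA.sqrt * B)).trace := by
        rw [← Matrix.mul_assoc, hA.sqrt_mul_self]
    _ = ((hA.sqrt * B) * hA.sqrt).trace := Matrix.trace_mul_comm _ _
    _ = ((hA.sqrt * hB.sqrt) * (hB.sqrt * hA.sqrt)).trace := by
        have : hA.sqrt * hB.sqrt * (hB.sqrt * hA.sqrt)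
            = hA.sqrt * (hB.sqrt * hB.sqrt) * hA.sqrt := by noncomm_ring
        rw [this, hB.sqrt_mul_self]

lemma trace_psd_mul_re_nonneg {n : ℕ} {A B : Mat n} (hA : A.PosSemidef) (hB : B.PosSemidef) :
    0 ≤ ((A * B).trace).re := by
  rw [trace_psd_mul_eq hA hB, trace_conjTranspose_mul_self_re]
  simp only [Complex.ofReal_re]
  exact Finset.sum_nonneg fun j _ => Finset.sum_nonneg fun i _ => Complex.normSq_nonneg _

lemma psd_mul_eq_zero_of_trace {n : ℕ} {A B : Mat n} (hA : A.PosSemidef) (hB : B.PosSemidef)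
    (h : (A * B).trace = 0) : A * B = 0 := by
  have h0 : hB.sqrt * hA.sqrt = 0 := by
    apply eq_zero_of_trace_conjTranspose_mul_self
    rw [← trace_psd_mul_eq hA hB, h]
  have h1 : hA.sqrt * hB.sqrt = 0 := by
    have := congrArg conjTranspose h0
    rwa [conjTranspose_mul, hA.posSemidef_sqrt.1, hB.posSemidef_sqrt.1,
      conjTranspose_zero] at this
  calc A * B = hA.sqrt * (hA.sqrt * hB.sqrt) * hB.sqrt := by
        rw [← Matrix.mul_assoc, Matrix.mul_assoc (hA.sqrt * hA.sqrt), hA.sqrt_mul_self,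
          ← Matrix.mul_assoc, Matrix.mul_assoc, hB.sqrt_mul_self]
    _ = 0 := by rw [h1, Matrix.mul_zero, Matrix.zero_mul]

lemma trace_mul_hermitian_real {n : ℕ} {A B : Mat n} (hA : A.IsHermitian) (hB : B.IsHermitian) :
    (A * B).trace = (((A * B).trace).re : ℂ) := by
  rw [eq_comm, ← Complex.conj_eq_iff_re]
  calc (starRingEnd ℂ) ((A * B).trace) = ((A * B)ᴴ).trace := by
        rw [Matrix.trace_conjTranspose]; rfl
    _ = (Bᴴ * Aᴴ).trace := by rw [conjTranspose_mul]
    _ = (B * A).trace := by rw [hA, hB]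
    _ = (A * B).trace := Matrix.trace_mul_comm _ _


variable {n : ℕ}

lemma toEuclideanLin_mul (A B : Mat n) :
    Matrix.toEuclideanLin (A * B) = (Matrix.toEuclideanLin A) ∘ₗ (Matrix.toEuclideanLin B) := by
  refine LinearMap.ext fun x => ?_
  simp [Matrix.toEuclideanLin_apply, Matrix.mulVec_mulVec]

lemma toEuclideanLin_one : Matrix.toEuclideanLin (1 : Mat n) = LinearMap.id := by
  refine LinearMap.ext fun x => ?_
  simp [Matrix.toEuclideanLin_apply]

lemma toEuclideanLin_inj {A B : Mat n}
    (h : Matrix.toEuclideanLin A = Matrix.toEuclideanLin B) : A = B :=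
  Matrix.toEuclideanLin.injective h

lemma mat_mul_eq_zero_of_forall {A B : Mat n}
    (h : ∀ x, Matrix.toEuclideanLin A (Matrix.toEuclideanLin B x) = 0) : A * B = 0 := by
  apply toEuclideanLin_inj
  rw [toEuclideanLin_mul]
  refine LinearMap.ext fun x => ?_
  simpa using h x

lemma projMat_apply (K : Submodule ℂ (EuclideanSpace ℂ (Fin n))) (x : EuclideanSpace ℂ (Fin n)) :
    Matrix.toEuclideanLin (projMat K) x = (K.orthogonalProjection x : EuclideanSpace ℂ (Fin n)) := by
  rw [projMat, Matrix.toEuclideanLin.apply_symm_apply]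
  rfl

lemma projMat_isHermitian (K : Submodule ℂ (EuclideanSpace ℂ (Fin n))) :
    (projMat K).IsHermitian := by
  rw [Matrix.isHermitian_iff_isSymmetric]
  intro x y
  rw [projMat_apply, projMat_apply]
  exact K.inner_starProjection_left_eq_right x y

lemma projMat_mul_self (K : Submodule ℂ (EuclideanSpace ℂ (Fin n))) :
    projMat K * projMat K = projMat K := by
  apply toEuclideanLin_inj
  rw [toEuclideanLin_mul]
  refine LinearMap.ext fun x => ?_
  simp only [LinearMap.comp_apply, projMat_apply]
  exact congrArg Subtype.val (Submodule.orthogonalProjection_mem_subspace_eq_self (K.orthogonalProjection x))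

lemma projMat_posSemidef (K : Submodule ℂ (EuclideanSpace ℂ (Fin n))) :
    (projMat K).PosSemidef := by
  have h : projMat K = (projMat K)ᴴ * projMat K := by
    rw [projMat_isHermitian K, projMat_mul_self]
  rw [h]
  exact Matrix.posSemidef_conjTranspose_mul_self _

lemma projMat_add_orthogonal (K : Submodule ℂ (EuclideanSpace ℂ (Fin n))) :
    projMat K + projMat Kᗮ = 1 := by
  apply toEuclideanLin_inj
  refine LinearMap.ext fun x => ?_
  rw [map_add, toEuclideanLin_one]
  simp only [LinearMap.add_apply, projMat_apply, LinearMap.id_apply]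
  exact K.starProjection_add_starProjection_orthogonal x

lemma projMat_sup_of_orthogonal {K L : Submodule ℂ (EuclideanSpace ℂ (Fin n))}
    (h : K ≤ Lᗮ) : projMat (K ⊔ L) = projMat K + projMat L := by
  apply toEuclideanLin_inj
  refine LinearMap.ext fun x => ?_
  rw [map_add]
  simp only [LinearMap.add_apply, projMat_apply]
  have hm : (K.orthogonalProjection x : EuclideanSpace ℂ (Fin n))
      + (L.orthogonalProjection x : EuclideanSpace ℂ (Fin n)) ∈ K ⊔ L :=
    Submodule.add_mem_sup (Submodule.coe_mem _) (Submodule.coe_mem _)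
  have key := Submodule.eq_starProjection_of_mem_of_inner_eq_zero (K := K ⊔ L) (u := x) hm ?_
  · exact key
  · intro w hw
    rcases Submodule.mem_sup.mp hw with ⟨a, ha, b, hb, rfl⟩
    have h1 : ∀ u ∈ K, (inner ℂ (x - (↑(K.orthogonalProjection x)
        + ↑(L.orthogonalProjection x))) u : ℂ) = 0 := by
      intro u hu
      have e1 : inner ℂ (x - (K.orthogonalProjection x : EuclideanSpace ℂ (Fin n))) u = 0 :=
        Submodule.starProjection_inner_eq_zero (K := K) x u hu
      have e2 : (inner ℂ ((L.orthogonalProjection x : EuclideanSpace ℂ (Fin n))) u : ℂ) = 0 := by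
        have hu2 := h hu
        rw [Submodule.mem_orthogonal] at hu2
        exact hu2 _ (Submodule.coe_mem _)
      calc (inner ℂ (x - (↑(K.orthogonalProjection x) + ↑(L.orthogonalProjection x))) u : ℂ)
          = inner ℂ (x - ↑(K.orthogonalProjection x)
              - ↑(L.orthogonalProjection x)) u := by rw [sub_add_eq_sub_sub]
        _ = (inner ℂ (x - (K.orthogonalProjection x : EuclideanSpace ℂ (Fin n))) u : ℂ)
              - inner ℂ ((L.orthogonalProjection x : EuclideanSpace ℂ (Fin n))) u := by
            rw [inner_sub_left]
        _ = 0 := by rw [e1, e2, sub_zero]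
    have h2 : ∀ u ∈ L, (inner ℂ (x - (↑(K.orthogonalProjection x)
        + ↑(L.orthogonalProjection x))) u : ℂ) = 0 := by
      intro u hu
      have e1 : inner ℂ (x - (L.orthogonalProjection x : EuclideanSpace ℂ (Fin n))) u = 0 :=
        Submodule.starProjection_inner_eq_zero (K := L) x u hu
      have e2 : (inner ℂ ((K.orthogonalProjection x : EuclideanSpace ℂ (Fin n))) u : ℂ) = 0 := by
        have hKu : (K.orthogonalProjection x : EuclideanSpace ℂ (Fin n)) ∈ Lᗮ :=
          h (Submodule.coe_mem _)
        rw [Submodule.mem_orthogonal] at hKu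
        rw [inner_eq_zero_symm]
        exact hKu _ hu
      calc (inner ℂ (x - (↑(K.orthogonalProjection x) + ↑(L.orthogonalProjection x))) u : ℂ)
          = inner ℂ (x - ↑(L.orthogonalProjection x)
              - ↑(K.orthogonalProjection x)) u := by rw [sub_add_eq_sub_sub_swap]
        _ = (inner ℂ (x - (L.orthogonalProjection x : EuclideanSpace ℂ (Fin n))) u : ℂ)
              - inner ℂ ((K.orthogonalProjection x : EuclideanSpace ℂ (Fin n))) u := by
            rw [inner_sub_left]
        _ = 0 := by rw [e1, e2, sub_zero]
    rw [inner_add_right, h1 a ha, h2 b hb, add_zero]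

lemma projMat_mul_projMat_of_orthogonal {K L : Submodule ℂ (EuclideanSpace ℂ (Fin n))}
    (h : L ≤ Kᗮ) : projMat K * projMat L = 0 := by
  apply mat_mul_eq_zero_of_forall
  intro x
  rw [projMat_apply, projMat_apply]
  have := Submodule.orthogonalProjectionOnto_apply_of_mem_orthogonal (K := K)
    (h (Submodule.coe_mem (L.orthogonalProjection x)))
  rw [this]
  simp

lemma hermitian_mul_projMat_eq_zero {ρ : Mat n} (hρ : ρ.IsHermitian)
    {K : Submodule ℂ (EuclideanSpace ℂ (Fin n))} (h : K ≤ (MatSupport ρ)ᗮ) :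
    ρ * projMat K = 0 := by
  apply mat_mul_eq_zero_of_forall
  intro x
  rw [projMat_apply]
  set y := (K.orthogonalProjection x : EuclideanSpace ℂ (Fin n)) with hy
  have hmem : y ∈ (MatSupport ρ)ᗮ := h (Submodule.coe_mem _)
  have hsymm := Matrix.isHermitian_iff_isSymmetric.mp hρ
  have : (inner ℂ (Matrix.toEuclideanLin ρ y) (Matrix.toEuclideanLin ρ y) : ℂ) = 0 := by
    rw [← hsymm]
    rw [Submodule.mem_orthogonal] at hmem
    exact hmem _ ⟨_, rfl⟩
  exact inner_self_eq_zero.mp this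

lemma mul_projMat_eq_zero_of_absorb {F ρ : Mat n} (hFρ : F * ρ = 0)
    {K : Submodule ℂ (EuclideanSpace ℂ (Fin n))} (h : K ≤ MatSupport ρ) :
    F * projMat K = 0 := by
  apply mat_mul_eq_zero_of_forall
  intro x
  rw [projMat_apply]
  obtain ⟨z, hz⟩ := h (Submodule.coe_mem (K.orthogonalProjection x))
  rw [← hz, ← LinearMap.comp_apply, ← toEuclideanLin_mul, hFρ]
  simp [Matrix.toEuclideanLin_apply]


variable {n : ℕ}

/-- `A*D*A + c•(1-A)` is positive definite when `A` is an orthogonal projection,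
`D ⪰ e•1` with `e > 0`, and `c > 0`. -/
lemma M_posDef {A D : Mat n} (hAh : Aᴴ = A) (hAA : A * A = A) (hD : D.PosSemidef)
    {e : ℝ} (he : 0 < e) (hDe : (D - (e : ℂ) • 1).PosSemidef) {c : ℝ} (hc : 0 < c) :
    (A * D * A + (c : ℂ) • (1 - A)).PosDef := by
  rw [posDef_iff_dotProduct_mulVec]
  have h1A : ((1 : Mat n) - A)ᴴ = 1 - A := by
    rw [conjTranspose_sub, hAh, conjTranspose_one]
  have h1AA : ((1 : Mat n) - A) * (1 - A) = 1 - A := by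
    rw [sub_mul, mul_sub, mul_sub, hAA, Matrix.one_mul, Matrix.mul_one]
    abel_nf
    rw [Matrix.one_mul]
  constructor
  · have hherm1 : (A * D * A).IsHermitian := by
      have := Matrix.isHermitian_conjTranspose_mul_mul A hD.1
      rwa [hAh] at this
    have hherm2 : ((c : ℂ) • ((1 : Mat n) - A)).IsHermitian := by
      unfold Matrix.IsHermitian
      rw [conjTranspose_smul, h1A]
      norm_num
    exact hherm1.add hherm2
  · intro x hx
    have key : star x ⬝ᵥ ((A * D * A + (c : ℂ) • (1 - A)) *ᵥ x)
        = star (A *ᵥ x) ⬝ᵥ (D *ᵥ (A *ᵥ x))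
          + (c : ℂ) * (star ((1 - A) *ᵥ x) ⬝ᵥ ((1 - A) *ᵥ x)) := by
      rw [Matrix.add_mulVec, dotProduct_add, Matrix.smul_mulVec, dotProduct_smul]
      congr 1
      · rw [← Matrix.mulVec_mulVec, ← Matrix.mulVec_mulVec, Matrix.dotProduct_mulVec _ A]
        rw [show star x ᵥ* A = star (A *ᵥ x) by rw [Matrix.star_mulVec, hAh]]
      · rw [smul_eq_mul]
        congr 1
        conv_lhs => rw [← h1AA]
        rw [← Matrix.mulVec_mulVec, Matrix.dotProduct_mulVec _ (1 - A)]
        rw [show star x ᵥ* (1 - A) = star ((1 - A) *ᵥ x) by rw [Matrix.star_mulVec, h1A]]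
    rw [key]
    by_cases hy : (1 - A) *ᵥ x = 0
    · have hax : A *ᵥ x = x := by
        have : (1 - A) *ᵥ x = x - A *ᵥ x := by
          rw [Matrix.sub_mulVec, Matrix.one_mulVec]
        rw [this] at hy
        have := sub_eq_zero.mp hy
        exact this.symm
      have hterm1 : (e : ℂ) * (star x ⬝ᵥ x) ≤ star (A *ᵥ x) ⬝ᵥ (D *ᵥ (A *ᵥ x)) := by
        rw [hax]
        have := (posSemidef_iff_dotProduct_mulVec.mp hDe).2 x
        rw [Matrix.sub_mulVec, dotProduct_sub, sub_nonneg, Matrix.smul_mulVec,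
          dotProduct_smul, Matrix.one_mulVec, smul_eq_mul] at this
        exact this
      have hpos : 0 < (e : ℂ) * (star x ⬝ᵥ x) := by
        have hxx : 0 < star x ⬝ᵥ x := Matrix.dotProduct_star_self_pos_iff.mpr hx
        have : (0:ℂ) < (e:ℂ) := by exact_mod_cast he
        exact mul_pos this hxx
      have h2 : 0 ≤ (c : ℂ) * (star ((1 - A) *ᵥ x) ⬝ᵥ ((1 - A) *ᵥ x)) := by
        apply mul_nonneg
        · exact_mod_cast hc.le
        · exact dotProduct_star_self_nonneg _
      calc (0:ℂ) < (e : ℂ) * (star x ⬝ᵥ x) := hpos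
        _ ≤ star (A *ᵥ x) ⬝ᵥ (D *ᵥ (A *ᵥ x)) := hterm1
        _ ≤ star (A *ᵥ x) ⬝ᵥ (D *ᵥ (A *ᵥ x))
            + (c : ℂ) * (star ((1 - A) *ᵥ x) ⬝ᵥ ((1 - A) *ᵥ x)) := le_add_of_nonneg_right h2
    · have h1 : 0 ≤ star (A *ᵥ x) ⬝ᵥ (D *ᵥ (A *ᵥ x)) := (posSemidef_iff_dotProduct_mulVec.mp hD).2 _
      have h2 : 0 < (c : ℂ) * (star ((1 - A) *ᵥ x) ⬝ᵥ ((1 - A) *ᵥ x)) := by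
        apply mul_pos
        · exact_mod_cast hc
        · exact Matrix.dotProduct_star_self_pos_iff.mpr hy
      calc (0:ℂ) < (c : ℂ) * (star ((1 - A) *ᵥ x) ⬝ᵥ ((1 - A) *ᵥ x)) := h2
        _ ≤ _ := le_add_of_nonneg_left h1

/-- All the algebraic facts about `R = (A*D*A + c•(1-A))⁻¹`. -/
lemma gen_facts {A D R : Mat n} {c : ℂ} (hc : c ≠ 0) (hcr : star c = c)
    (hAA : A * A = A) (hAh : Aᴴ = A) (hDh : Dᴴ = D)
    (hMR : (A * D * A + c • (1 - A)) * R = 1)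
    (hRM : R * (A * D * A + c • (1 - A)) = 1) :
    A * R = R * A ∧ A * D * A * R = A ∧ Rᴴ = R := by
  set M := A * D * A + c • (1 - A) with hM
  have hMA : M * A = A * D * A := by
    rw [hM, add_mul, smul_mul_assoc, sub_mul, Matrix.one_mul, Matrix.mul_assoc (A*D) A A, hAA]
    simp
  have hAM : A * M = A * D * A := by
    rw [hM, mul_add, mul_smul_comm, mul_sub, Matrix.mul_one, ← Matrix.mul_assoc,
      ← Matrix.mul_assoc, hAA]
    simp
  have hAR : A * R = R * A := by
    calc A * R = (R * M) * (A * R) := by rw [hRM, Matrix.one_mul]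
      _ = R * ((M * A) * R) := by rw [Matrix.mul_assoc, Matrix.mul_assoc]
      _ = R * ((A * M) * R) := by rw [hMA, hAM]
      _ = (R * A) * (M * R) := by rw [Matrix.mul_assoc, Matrix.mul_assoc]
      _ = R * A := by rw [hMR, Matrix.mul_one]
  have hM1A : M * (1 - A) = c • (1 - A) := by
    rw [hM, add_mul, smul_mul_assoc]
    have e1 : (A * D * A) * (1 - A) = 0 := by
      rw [mul_sub, Matrix.mul_one, Matrix.mul_assoc (A*D) A A, hAA, sub_self]
    have e2 : ((1:Mat n) - A) * (1 - A) = 1 - A := by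
      rw [sub_mul, mul_sub, mul_sub, hAA, Matrix.one_mul, Matrix.mul_one]
      abel_nf
      rw [Matrix.one_mul]
    rw [e1, e2, zero_add]
  have hR1A : R * (1 - A) = c⁻¹ • (1 - A) := by
    have this2 : (1 : Mat n) - A = c • (R * (1 - A)) := by
      calc (1:Mat n) - A = (R * M) * (1 - A) := by rw [hRM, Matrix.one_mul]
        _ = R * (M * (1 - A)) := by rw [Matrix.mul_assoc]
        _ = R * (c • (1 - A)) := by rw [hM1A]
        _ = c • (R * (1 - A)) := by rw [mul_smul_comm]
    rw [eq_comm, inv_smul_eq_iff₀ hc]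
    exact this2
  have hf2 : A * D * A * R = A := by
    have expand : (A * D * A) * R + c • ((1 - A) * R) = 1 := by
      rw [← smul_mul_assoc, ← add_mul, ← hM, hMR]
    have h1AR : ((1:Mat n) - A) * R = R * (1 - A) := by
      rw [sub_mul, mul_sub, Matrix.one_mul, Matrix.mul_one, hAR]
    rw [h1AR, hR1A, smul_smul, mul_inv_cancel₀ hc, one_smul] at expand
    have := congrArg (· - ((1 : Mat n) - A)) expand
    simpa [sub_sub_cancel] using this
  refine ⟨hAR, hf2, ?_⟩
  · -- R hermitian: M hermitian and R = M⁻¹... but here R is abstract with MR = RM = 1.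
    -- Rᴴ = Rᴴ * (M * R) = ((Mᴴ) * R)ᴴ ... derive: Mᴴ = M, so Rᴴ * Mᴴ = (M*R)ᴴ = 1, etc.
    have hMh : Mᴴ = M := by
      rw [hM, conjTranspose_add, conjTranspose_smul, conjTranspose_mul, conjTranspose_mul,
        hAh, hDh, conjTranspose_sub, hAh, conjTranspose_one, hcr, ← Matrix.mul_assoc]
    have h1 : Rᴴ * M = 1 := by
      have := congrArg conjTranspose hMR
      rwa [conjTranspose_mul, conjTranspose_one, hMh] at this
    calc Rᴴ = Rᴴ * (M * R) := by rw [hMR, Matrix.mul_one]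
      _ = (Rᴴ * M) * R := by rw [Matrix.mul_assoc]
      _ = R := by rw [h1, Matrix.one_mul]

section GenIdentities

variable {A B D R : Mat n}

lemma ctx_facts (hAh : Aᴴ = A) (hDh : Dᴴ = D) (hRh : Rᴴ = R)
    (hAR : A * R = R * A) (hf2 : A * D * A * R = A) :
    (∀ X : Mat n, A * (D * (R * (A * X))) = A * X)
    ∧ (∀ X : Mat n, A * (R * (D * (R * (A * X)))) = R * (A * X))
    ∧ (∀ Y : Mat n, A * (R * Y) = R * (A * Y)) := by
  have comm_ctx : ∀ Y : Mat n, A * (R * Y) = R * (A * Y) := fun Y => by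
    rw [← Matrix.mul_assoc, hAR, Matrix.mul_assoc]
  have g1r : A * (D * (R * A)) = A := by
    calc A * (D * (R * A)) = A * (D * (A * R)) := by rw [hAR]
      _ = A * D * A * R := by rw [← Matrix.mul_assoc, ← Matrix.mul_assoc]
      _ = A := hf2
  have g1_ctx : ∀ X : Mat n, A * (D * (R * (A * X))) = A * X := fun X => by
    calc A * (D * (R * (A * X))) = (A * (D * (R * A))) * X := by
          simp only [Matrix.mul_assoc]
      _ = A * X := by rw [g1r]
  have g2r : A * (R * (D * A)) = A := by
    have h := congrArg conjTranspose g1r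
    simp only [conjTranspose_mul, hAh, hDh, hRh, Matrix.mul_assoc] at h
    exact h
  have g3_ctx : ∀ X : Mat n, A * (R * (D * (R * (A * X)))) = R * (A * X) := fun X => by
    have core : A * (R * (D * (R * A))) = R * A := by
      calc A * (R * (D * (R * A))) = A * (R * (D * (A * R))) := by rw [hAR]
        _ = (A * (R * (D * A))) * R := by simp only [Matrix.mul_assoc]
        _ = A * R := by rw [g2r]
        _ = R * A := hAR
    calc A * (R * (D * (R * (A * X)))) = (A * (R * (D * (R * A)))) * X := by
          simp only [Matrix.mul_assoc]
      _ = (R * A) * X := by rw [core]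
      _ = R * (A * X) := by rw [Matrix.mul_assoc]
  exact ⟨g1_ctx, g3_ctx, comm_ctx⟩

lemma gen1_eq (hAh : Aᴴ = A) (hBh : Bᴴ = B) (hDh : Dᴴ = D) (hRh : Rᴴ = R)
    (hAR : A * R = R * A) (hf2 : A * D * A * R = A) :
    (A + R * (A * (D * B)))ᴴ * D * (A + R * (A * (D * B)))
      = A * (D * A) + A * (D * B) + B * (D * A) + B * (D * (R * (A * (D * B)))) := by
  obtain ⟨g1_ctx, g3_ctx, comm_ctx⟩ := ctx_facts hAh hDh hRh hAR hf2
  have g2r : A * (R * (D * A)) = A := by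
    have h := congrArg conjTranspose (g1_ctx 1)
    simp only [Matrix.mul_one, conjTranspose_mul, hAh, hDh, hRh, Matrix.mul_assoc] at h
    exact h
  have hEadj : (A + R * (A * (D * B)))ᴴ = A + B * (D * (A * R)) := by
    simp only [conjTranspose_add, conjTranspose_mul, hAh, hBh, hDh, hRh, Matrix.mul_assoc]
  rw [hEadj]
  simp only [add_mul, mul_add, Matrix.mul_assoc]
  rw [g1_ctx (D * B)]
  rw [show A * (R * (D * A)) = A from g2r]
  rw [g3_ctx (D * B)]
  abel

lemma gen2_eq (hAh : Aᴴ = A) (hBh : Bᴴ = B) (hDh : Dᴴ = D) (hRh : Rᴴ = R)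
    (hAR : A * R = R * A) (hf2 : A * D * A * R = A) :
    (B - R * (A * (D * B)))ᴴ * D * (B - R * (A * (D * B)))
      = B * (D * B) - B * (D * (R * (A * (D * B)))) := by
  obtain ⟨g1_ctx, g3_ctx, comm_ctx⟩ := ctx_facts hAh hDh hRh hAR hf2
  have hEadj : (B - R * (A * (D * B)))ᴴ = B - B * (D * (A * R)) := by
    simp only [conjTranspose_sub, conjTranspose_mul, hAh, hBh, hDh, hRh, Matrix.mul_assoc]
  rw [hEadj]
  simp only [sub_mul, mul_sub, Matrix.mul_assoc]
  rw [comm_ctx (D * B)]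
  rw [g3_ctx (D * B)]
  abel

lemma gen3_eq (hAh : Aᴴ = A) (hBh : Bᴴ = B) (hDh : Dᴴ = D) (hRh : Rᴴ = R)
    (hAR : A * R = R * A) (hf2 : A * D * A * R = A) :
    (R * (A * (D * B)))ᴴ * D * (R * (A * (D * B)))
      = B * (D * (R * (A * (D * B)))) := by
  obtain ⟨g1_ctx, g3_ctx, comm_ctx⟩ := ctx_facts hAh hDh hRh hAR hf2
  have hEadj : (R * (A * (D * B)))ᴴ = B * (D * (A * R)) := by
    simp only [conjTranspose_mul, hAh, hBh, hDh, hRh, Matrix.mul_assoc]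
  rw [hEadj]
  simp only [Matrix.mul_assoc]
  rw [g3_ctx (D * B)]

end GenIdentities


lemma trace_sandwich {n : ℕ} (P ρ G : Mat n) :
    ((P * ρ * P) * G).trace = (ρ * (P * (G * P))).trace := by
  calc ((P * ρ * P) * G).trace = (P * (ρ * (P * G))).trace := by simp only [Matrix.mul_assoc]
    _ = ((ρ * (P * G)) * P).trace := Matrix.trace_mul_comm _ _
    _ = (ρ * (P * (G * P))).trace := by simp only [Matrix.mul_assoc]


set_option maxHeartbeats 2000000 in
/-- Core construction: from a full USD POVM, build a compressed POVM with controlled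
failure, using ε-regularized Schur complements. -/
lemma core_reduction {ρ1 ρ2 F1 F2 Fq Q1 Q2 P : Mat n} {ε : ℝ} (hε : 0 < ε)
    (hρ1 : ρ1.PosSemidef) (hρ2 : ρ2.PosSemidef)
    (hF1 : F1.PosSemidef) (hF2 : F2.PosSemidef) (hFq : Fq.PosSemidef)
    (hsum : F1 + F2 + Fq = 1)
    (hQ1h : Q1ᴴ = Q1) (hQ2h : Q2ᴴ = Q2) (hPh : Pᴴ = P)
    (hQ1i : Q1 * Q1 = Q1) (hQ2i : Q2 * Q2 = Q2) (hPi : P * P = P)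
    (hQ1psd : Q1.PosSemidef) (hQ2psd : Q2.PosSemidef)
    (hQ12 : Q1 * Q2 = 0) (hQ21 : Q2 * Q1 = 0) (hQ1P : Q1 * P = 0) (hPQ1 : P * Q1 = 0)
    (hQ2P : Q2 * P = 0) (hPQ2 : P * Q2 = 0) (hQsum : Q1 + Q2 + P = 1)
    (hρ1F2 : ρ1 * F2 = 0) (hρ2F1 : ρ2 * F1 = 0)
    (hρ1Q1 : ρ1 * Q1 = 0) (hρ2Q2 : ρ2 * Q2 = 0)
    (hF2Q2 : F2 * Q2 = 0) (hF1Q1 : F1 * Q1 = 0) :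
    ∃ G1 G2 Gq : Mat n,
      G1.PosSemidef ∧ G2.PosSemidef ∧ Gq.PosSemidef ∧ G1 + G2 + Gq = 1 ∧
      (P * ρ1 * P) * G2 = 0 ∧ (P * ρ2 * P) * G1 = 0 ∧
      ((ρ1 * F1).trace).re ≤ (1+ε) * (((ρ1 * Q2).trace).re + (((P * ρ1 * P) * G1).trace).re) ∧
      ((ρ2 * F2).trace).re ≤ (1+ε) * (((ρ2 * Q1).trace).re + (((P * ρ2 * P) * G2).trace).re) := by
  -- basic conjugate facts
  have hQ2F2 : Q2 * F2 = 0 := by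
    have := congrArg conjTranspose hF2Q2
    rwa [conjTranspose_mul, hQ2h, hF2.1, conjTranspose_zero] at this
  have hQ1F1 : Q1 * F1 = 0 := by
    have := congrArg conjTranspose hF1Q1
    rwa [conjTranspose_mul, hQ1h, hF1.1, conjTranspose_zero] at this
  have hF2ρ1 : F2 * ρ1 = 0 := by
    have := congrArg conjTranspose hρ1F2
    rwa [conjTranspose_mul, hρ1.1, hF2.1, conjTranspose_zero] at this
  have hF1ρ2 : F1 * ρ2 = 0 := by
    have := congrArg conjTranspose hρ2F1
    rwa [conjTranspose_mul, hρ2.1, hF1.1, conjTranspose_zero] at this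
  set c : ℂ := ((1 + ε : ℝ) : ℂ) with hc_def
  have hc0 : (0:ℝ) < 1 + ε := by linarith
  have hc : c ≠ 0 := by
    rw [hc_def]
    exact_mod_cast hc0.ne'
  have hcr : star c = c := by rw [hc_def]; exact Complex.conj_ofReal _
  set D1 : Mat n := c • 1 - F1 with hD1_def
  set D2 : Mat n := c • 1 - F2 with hD2_def
  set Db : Mat n := c • 1 - (F1 + F2) with hDb_def
  -- PSD and shifted-PSD facts for D's
  have hFqsub : (1 : Mat n) - F1 - F2 = Fq := by rw [← hsum]; abel
  have hD1e : (D1 - (ε:ℂ) • 1).PosSemidef := by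
    have : D1 - (ε:ℂ) • 1 = F2 + Fq := by
      rw [hD1_def, hc_def]
      rw [show ((1 + ε : ℝ) : ℂ) = 1 + (ε:ℂ) by push_cast; ring]
      rw [← hFqsub]
      simp only [add_smul, one_smul]
      abel
    rw [this]; exact psd_add hF2 hFq
  have hD2e : (D2 - (ε:ℂ) • 1).PosSemidef := by
    have : D2 - (ε:ℂ) • 1 = F1 + Fq := by
      rw [hD2_def, hc_def]
      rw [show ((1 + ε : ℝ) : ℂ) = 1 + (ε:ℂ) by push_cast; ring]
      rw [← hFqsub]
      simp only [add_smul, one_smul]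
      abel
    rw [this]; exact psd_add hF1 hFq
  have hDbe : (Db - (ε:ℂ) • 1).PosSemidef := by
    have : Db - (ε:ℂ) • 1 = Fq := by
      rw [hDb_def, hc_def]
      rw [show ((1 + ε : ℝ) : ℂ) = 1 + (ε:ℂ) by push_cast; ring]
      rw [← hFqsub]
      simp only [add_smul, one_smul]
      abel
    rw [this]; exact hFq
  have epsd : ((ε:ℂ) • (1 : Mat n)).PosSemidef := psd_smul_real Matrix.PosSemidef.one hε.le
  have hD1psd : D1.PosSemidef := by
    have h := psd_add epsd hD1e
    have e : (ε:ℂ) • (1 : Mat n) + (D1 - (ε:ℂ) • 1) = D1 := by abel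
    rwa [e] at h
  have hD2psd : D2.PosSemidef := by
    have h := psd_add epsd hD2e
    have e : (ε:ℂ) • (1 : Mat n) + (D2 - (ε:ℂ) • 1) = D2 := by abel
    rwa [e] at h
  have hDbpsd : Db.PosSemidef := by
    have h := psd_add epsd hDbe
    have e : (ε:ℂ) • (1 : Mat n) + (Db - (ε:ℂ) • 1) = Db := by abel
    rwa [e] at h
  have hD1h : D1ᴴ = D1 := hD1psd.1
  have hD2h : D2ᴴ = D2 := hD2psd.1
  have hDbh : Dbᴴ = Db := hDbpsd.1
  -- Q := Q1 + Q2
  set Qs : Mat n := Q1 + Q2 with hQs_def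
  have hQsh : Qsᴴ = Qs := by rw [hQs_def, conjTranspose_add, hQ1h, hQ2h]
  have hQsi : Qs * Qs = Qs := by
    rw [hQs_def, add_mul, mul_add, mul_add, hQ1i, hQ2i, hQ12, hQ21]
    abel
  have hQsP : Qs * P = 0 := by rw [hQs_def, add_mul, hQ1P, hQ2P, add_zero]
  have hPQs : P * Qs = 0 := by rw [hQs_def, mul_add, hPQ1, hPQ2, add_zero]
  -- the three regularized middle matrices and inverses
  set M2 : Mat n := Q2 * D1 * Q2 + c • (1 - Q2) with hM2_def
  set M1 : Mat n := Q1 * D2 * Q1 + c • (1 - Q1) with hM1_def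
  set Mb : Mat n := Qs * Db * Qs + c • (1 - Qs) with hMb_def
  have hM2pd : M2.PosDef := M_posDef hQ2h hQ2i hD1psd hε hD1e hc0
  have hM1pd : M1.PosDef := M_posDef hQ1h hQ1i hD2psd hε hD2e hc0
  have hMbpd : Mb.PosDef := M_posDef hQsh hQsi hDbpsd hε hDbe hc0
  set R2 : Mat n := M2⁻¹ with hR2_def
  set R1 : Mat n := M1⁻¹ with hR1_def
  set Rb : Mat n := Mb⁻¹ with hRb_def
  have hM2R2 : M2 * R2 = 1 := Matrix.mul_nonsing_inv _ hM2pd.det_pos.ne'.isUnit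
  have hR2M2 : R2 * M2 = 1 := Matrix.nonsing_inv_mul _ hM2pd.det_pos.ne'.isUnit
  have hM1R1 : M1 * R1 = 1 := Matrix.mul_nonsing_inv _ hM1pd.det_pos.ne'.isUnit
  have hR1M1 : R1 * M1 = 1 := Matrix.nonsing_inv_mul _ hM1pd.det_pos.ne'.isUnit
  have hMbRb : Mb * Rb = 1 := Matrix.mul_nonsing_inv _ hMbpd.det_pos.ne'.isUnit
  have hRbMb : Rb * Mb = 1 := Matrix.nonsing_inv_mul _ hMbpd.det_pos.ne'.isUnit
  obtain ⟨hAR2, hf22, hR2h⟩ := gen_facts hc hcr hQ2i hQ2h hD1h hM2R2 hR2M2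
  obtain ⟨hAR1, hf21, hR1h⟩ := gen_facts hc hcr hQ1i hQ1h hD2h hM1R1 hR1M1
  obtain ⟨hARb, hf2b, hRbh⟩ := gen_facts hc hcr hQsi hQsh hDbh hMbRb hRbMb
  -- context helpers
  have hPctx : ∀ W : Mat n, P * (P * W) = P * W := fun W => by
    rw [← Matrix.mul_assoc, hPi]
  have habs1 : ∀ Z : Mat n, Q1 * (R1 * (Q1 * Z)) = R1 * (Q1 * Z) := fun Z => by
    rw [← Matrix.mul_assoc, hAR1, Matrix.mul_assoc, ← Matrix.mul_assoc Q1 Q1 Z, hQ1i]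
  have habs2 : ∀ Z : Mat n, Q2 * (R2 * (Q2 * Z)) = R2 * (Q2 * Z) := fun Z => by
    rw [← Matrix.mul_assoc, hAR2, Matrix.mul_assoc, ← Matrix.mul_assoc Q2 Q2 Z, hQ2i]
  -- D relations
  have hQ2D : Q2 * Db = Q2 * D1 := by
    rw [hDb_def, hD1_def, mul_sub, mul_sub, mul_add, hQ2F2, add_zero]
  have hDQ2 : Db * Q2 = D1 * Q2 := by
    rw [hDb_def, hD1_def, sub_mul, sub_mul, add_mul, hF2Q2, add_zero]
  have hQsum' : Q1 + Q2 + P = 1 := by rw [← hQsum, hQs_def]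
  have hQ1D : Q1 * Db = Q1 * D2 := by
    rw [hDb_def, hD2_def, mul_sub, mul_sub, mul_add, hQ1F1, zero_add]
  have hDQ1 : Db * Q1 = D2 * Q1 := by
    rw [hDb_def, hD2_def, sub_mul, sub_mul, add_mul, hF1Q1, zero_add]
  have hQ1D1Q2 : Q1 * (D1 * Q2) = 0 := by
    rw [hD1_def, sub_mul, smul_mul_assoc, Matrix.one_mul, mul_sub, mul_smul_comm, hQ12,
      smul_zero, ← Matrix.mul_assoc, hQ1F1, Matrix.zero_mul, sub_zero]
  have hQ2D2Q1 : Q2 * (D2 * Q1) = 0 := by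
    rw [hD2_def, sub_mul, smul_mul_assoc, Matrix.one_mul, mul_sub, mul_smul_comm, hQ21,
      smul_zero, ← Matrix.mul_assoc, hQ2F2, Matrix.zero_mul, sub_zero]
  -- Mb, M2, M1 column relations
  have hQsQ2 : Qs * Q2 = Q2 := by rw [hQs_def, add_mul, hQ12, hQ2i, zero_add]
  have hQsQ1 : Qs * Q1 = Q1 := by rw [hQs_def, add_mul, hQ1i, hQ21, add_zero]
  have hMbQ2 : Mb * Q2 = Q2 * D1 * Q2 := by
    have h1 : ((1 : Mat n) - Qs) * Q2 = 0 := by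
      rw [sub_mul, Matrix.one_mul, hQsQ2, sub_self]
    rw [hMb_def, add_mul, smul_mul_assoc, h1, smul_zero, add_zero]
    calc Qs * Db * Qs * Q2 = Qs * Db * (Qs * Q2) := by rw [Matrix.mul_assoc]
      _ = Qs * (Db * Q2) := by rw [hQsQ2, Matrix.mul_assoc]
      _ = Qs * (D1 * Q2) := by rw [hDQ2]
      _ = Q1 * (D1 * Q2) + Q2 * (D1 * Q2) := by rw [hQs_def, add_mul]
      _ = Q2 * D1 * Q2 := by rw [hQ1D1Q2, zero_add, Matrix.mul_assoc]
  have hMbQ1 : Mb * Q1 = Q1 * D2 * Q1 := by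
    have h1 : ((1 : Mat n) - Qs) * Q1 = 0 := by
      rw [sub_mul, Matrix.one_mul, hQsQ1, sub_self]
    rw [hMb_def, add_mul, smul_mul_assoc, h1, smul_zero, add_zero]
    calc Qs * Db * Qs * Q1 = Qs * Db * (Qs * Q1) := by rw [Matrix.mul_assoc]
      _ = Qs * (Db * Q1) := by rw [hQsQ1, Matrix.mul_assoc]
      _ = Qs * (D2 * Q1) := by rw [hDQ1]
      _ = Q1 * (D2 * Q1) + Q2 * (D2 * Q1) := by rw [hQs_def, add_mul]
      _ = Q1 * D2 * Q1 := by rw [hQ2D2Q1, add_zero, Matrix.mul_assoc]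
  have hQ2M2 : Q2 * M2 = Q2 * D1 * Q2 := by
    have h1 : Q2 * ((1 : Mat n) - Q2) = 0 := by
      rw [mul_sub, Matrix.mul_one, hQ2i, sub_self]
    rw [hM2_def, mul_add, mul_smul_comm, h1, smul_zero, add_zero, ← Matrix.mul_assoc,
      ← Matrix.mul_assoc, hQ2i]
  have hQ1M1 : Q1 * M1 = Q1 * D2 * Q1 := by
    have h1 : Q1 * ((1 : Mat n) - Q1) = 0 := by
      rw [mul_sub, Matrix.mul_one, hQ1i, sub_self]
    rw [hM1_def, mul_add, mul_smul_comm, h1, smul_zero, add_zero, ← Matrix.mul_assoc,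
      ← Matrix.mul_assoc, hQ1i]
  have hRbQ2 : Rb * Q2 = R2 * Q2 := by
    calc Rb * Q2 = Rb * (Q2 * (M2 * R2)) := by rw [hM2R2, Matrix.mul_one]
      _ = Rb * ((Q2 * M2) * R2) := by rw [Matrix.mul_assoc]
      _ = Rb * ((Mb * Q2) * R2) := by rw [hQ2M2, hMbQ2]
      _ = ((Rb * Mb) * Q2) * R2 := by simp only [Matrix.mul_assoc]
      _ = Q2 * R2 := by rw [hRbMb, Matrix.one_mul]
      _ = R2 * Q2 := hAR2
  have hRbQ1 : Rb * Q1 = R1 * Q1 := by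
    calc Rb * Q1 = Rb * (Q1 * (M1 * R1)) := by rw [hM1R1, Matrix.mul_one]
      _ = Rb * ((Q1 * M1) * R1) := by rw [Matrix.mul_assoc]
      _ = Rb * ((Mb * Q1) * R1) := by rw [hQ1M1, hMbQ1]
      _ = ((Rb * Mb) * Q1) * R1 := by simp only [Matrix.mul_assoc]
      _ = Q1 * R1 := by rw [hRbMb, Matrix.one_mul]
      _ = R1 * Q1 := hAR1
  -- definitions of the compressed POVM
  set CT1 : Mat n := P * (D1 * (R2 * (Q2 * (D1 * P)))) with hCT1_def
  set CT2 : Mat n := P * (D2 * (R1 * (Q1 * (D2 * P)))) with hCT2_def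
  set Gf1 : Mat n := P * (F1 * P) + CT1 with hGf1_def
  set Gf2 : Mat n := P * (F2 * P) + CT2 with hGf2_def
  set s : ℝ := (1 + ε)⁻¹ with hs_def
  have hs0 : (0:ℝ) ≤ s := by rw [hs_def]; positivity
  have hsc : (s:ℂ) * c = 1 := by
    rw [hs_def, hc_def]
    push_cast
    field_simp
  set G1 : Mat n := (s:ℂ) • Gf1 with hG1_def
  set G2 : Mat n := (s:ℂ) • Gf2 with hG2_def
  -- PSD of the pieces
  have hCT1psd : CT1.PosSemidef := by
    have h := hD1psd.conjTranspose_mul_mul_same (R2 * (Q2 * (D1 * P)))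
    rwa [gen3_eq hQ2h hPh hD1h hR2h hAR2 hf22, ← hCT1_def] at h
  have hCT2psd : CT2.PosSemidef := by
    have h := hD2psd.conjTranspose_mul_mul_same (R1 * (Q1 * (D2 * P)))
    rwa [gen3_eq hQ1h hPh hD2h hR1h hAR1 hf21, ← hCT2_def] at h
  have hPF1Ppsd : (P * (F1 * P)).PosSemidef := by
    have h := hF1.mul_mul_conjTranspose_same P
    rwa [hPh, Matrix.mul_assoc] at h
  have hPF2Ppsd : (P * (F2 * P)).PosSemidef := by
    have h := hF2.mul_mul_conjTranspose_same P
    rwa [hPh, Matrix.mul_assoc] at h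
  have hGf1psd : Gf1.PosSemidef := psd_add hPF1Ppsd hCT1psd
  have hGf2psd : Gf2.PosSemidef := psd_add hPF2Ppsd hCT2psd
  have hG1psd : G1.PosSemidef := psd_smul_real hGf1psd hs0
  have hG2psd : G2.PosSemidef := psd_smul_real hGf2psd hs0
  -- splitting identity : P*(Db*(Rb*(Qs*(Db*P)))) = CT2 + CT1
  have hsplit : P * (Db * (Rb * (Qs * (Db * P)))) = CT2 + CT1 := by
    have hQsDbP : Qs * (Db * P) = Q1 * (D2 * P) + Q2 * (D1 * P) := by
      rw [hQs_def, add_mul]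
      congr 1
      · rw [← Matrix.mul_assoc, hQ1D, Matrix.mul_assoc]
      · rw [← Matrix.mul_assoc, hQ2D, Matrix.mul_assoc]
    rw [hQsDbP, mul_add, mul_add, mul_add]
    congr 1
    · -- P * (Db * (Rb * (Q1 * (D2 * P)))) = CT2
      rw [show Rb * (Q1 * (D2 * P)) = R1 * (Q1 * (D2 * P)) by
        rw [← Matrix.mul_assoc, hRbQ1, Matrix.mul_assoc]]
      rw [← habs1 (D2 * P)]
      rw [show Db * (Q1 * (R1 * (Q1 * (D2 * P)))) = D2 * (Q1 * (R1 * (Q1 * (D2 * P)))) by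
        rw [← Matrix.mul_assoc, hDQ1, Matrix.mul_assoc]]
      rw [habs1 (D2 * P), hCT2_def]
    · -- P * (Db * (Rb * (Q2 * (D1 * P)))) = CT1
      rw [show Rb * (Q2 * (D1 * P)) = R2 * (Q2 * (D1 * P)) by
        rw [← Matrix.mul_assoc, hRbQ2, Matrix.mul_assoc]]
      rw [← habs2 (D1 * P)]
      rw [show Db * (Q2 * (R2 * (Q2 * (D1 * P)))) = D1 * (Q2 * (R2 * (Q2 * (D1 * P)))) by
        rw [← Matrix.mul_assoc, hDQ2, Matrix.mul_assoc]]
      rw [habs2 (D1 * P), hCT1_def]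
  -- PSD of c•P - Gf1 - Gf2
  have hWpsd : (c • P - Gf1 - Gf2).PosSemidef := by
    have hgen2 := gen2_eq hQsh hPh hDbh hRbh hARb hf2b
    have hpsd := hDbpsd.conjTranspose_mul_mul_same (P - Rb * (Qs * (Db * P)))
    rw [hgen2, hsplit] at hpsd
    have hPDbP : P * (Db * P) = c • P - P * (F1 * P) - P * (F2 * P) := by
      have e : Db * P = c • P - F1 * P - F2 * P := by
        rw [hDb_def, sub_mul, add_mul, smul_mul_assoc, Matrix.one_mul, sub_sub]
      rw [e, mul_sub, mul_sub, mul_smul_comm, hPi, ← Matrix.mul_assoc, ← Matrix.mul_assoc,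
        Matrix.mul_assoc P F1 P, Matrix.mul_assoc P F2 P]
    rw [hPDbP] at hpsd
    have e2 : c • P - P * (F1 * P) - P * (F2 * P) - (CT2 + CT1) = c • P - Gf1 - Gf2 := by
      rw [hGf1_def, hGf2_def]; abel
    rwa [e2] at hpsd
  have hGqpsd : ((1 : Mat n) - G1 - G2).PosSemidef := by
    have hQspsd : Qs.PosSemidef := by rw [hQs_def]; exact psd_add hQ1psd hQ2psd
    have hide : (1 : Mat n) - G1 - G2 = Qs + (s:ℂ) • (c • P - Gf1 - Gf2) := by
      rw [hG1_def, hG2_def, smul_sub, smul_sub, smul_smul, hsc, one_smul, ← hQsum]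
      abel
    rw [hide]
    exact psd_add hQspsd (psd_smul_real hWpsd hs0)
  -- orthogonality of compressed states with compressed POVM elements
  have hPeq : P = 1 - Qs := by rw [← hQsum]; abel
  have hρ1P : ρ1 * P = ρ1 - ρ1 * Q2 := by
    rw [hPeq, mul_sub, Matrix.mul_one, hQs_def, mul_add, hρ1Q1, zero_add]
  have hρ2P : ρ2 * P = ρ2 - ρ2 * Q1 := by
    rw [hPeq, mul_sub, Matrix.mul_one, hQs_def, mul_add, hρ2Q2, add_zero]
  have hρ1PF2 : ρ1 * P * F2 = 0 := by
    rw [hρ1P, sub_mul, hρ1F2, Matrix.mul_assoc, hQ2F2, Matrix.mul_zero, zero_sub, neg_zero]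
  have hρ2PF1 : ρ2 * P * F1 = 0 := by
    rw [hρ2P, sub_mul, hρ2F1, Matrix.mul_assoc, hQ1F1, Matrix.mul_zero, zero_sub, neg_zero]
  have hρ1PF2ctx : ∀ W : Mat n, ρ1 * (P * (F2 * W)) = 0 := fun W => by
    calc ρ1 * (P * (F2 * W)) = ((ρ1 * P) * F2) * W := by simp only [Matrix.mul_assoc]
      _ = 0 := by rw [hρ1PF2, Matrix.zero_mul]
  have hρ2PF1ctx : ∀ W : Mat n, ρ2 * (P * (F1 * W)) = 0 := fun W => by
    calc ρ2 * (P * (F1 * W)) = ((ρ2 * P) * F1) * W := by simp only [Matrix.mul_assoc]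
      _ = 0 := by rw [hρ2PF1, Matrix.zero_mul]
  have ho7 : (P * ρ1 * P) * G2 = 0 := by
    rw [hG2_def, mul_smul_comm]
    rw [hGf2_def, mul_add]
    have t1 : (P * ρ1 * P) * (P * (F2 * P)) = 0 := by
      calc (P * ρ1 * P) * (P * (F2 * P)) = P * (ρ1 * (P * (P * (F2 * P)))) := by
            simp only [Matrix.mul_assoc]
        _ = P * (ρ1 * (P * (F2 * P))) := by rw [hPctx]
        _ = 0 := by rw [hρ1PF2ctx, Matrix.mul_zero]
    have t2 : (P * ρ1 * P) * CT2 = 0 := by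
      rw [hCT2_def]
      calc (P * ρ1 * P) * (P * (D2 * (R1 * (Q1 * (D2 * P)))))
          = P * (ρ1 * (P * (P * (D2 * (R1 * (Q1 * (D2 * P))))))) := by
            simp only [Matrix.mul_assoc]
        _ = P * (ρ1 * (P * (D2 * (R1 * (Q1 * (D2 * P)))))) := by rw [hPctx]
        _ = P * (ρ1 * (P * (D2 * (Q1 * (R1 * (Q1 * (D2 * P))))))) := by
            rw [habs1 (D2 * P)]
        _ = 0 := by
            have e : D2 * (Q1 * (R1 * (Q1 * (D2 * P))))
                = c • (Q1 * (R1 * (Q1 * (D2 * P)))) - F2 * (Q1 * (R1 * (Q1 * (D2 * P)))) := by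
              rw [hD2_def, sub_mul, smul_mul_assoc, Matrix.one_mul]
            rw [e]
            simp only [mul_sub, mul_smul_comm]
            have e2 : ρ1 * (P * (Q1 * (R1 * (Q1 * (D2 * P))))) = 0 := by
              calc ρ1 * (P * (Q1 * (R1 * (Q1 * (D2 * P)))))
                  = ρ1 * ((P * Q1) * (R1 * (Q1 * (D2 * P)))) := by rw [Matrix.mul_assoc]
                _ = 0 := by rw [hPQ1, Matrix.zero_mul, Matrix.mul_zero]
            have e3 : ρ1 * (P * (F2 * (Q1 * (R1 * (Q1 * (D2 * P)))))) = 0 := hρ1PF2ctx _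
            rw [e2, e3]
            simp
    rw [t1, t2, add_zero, smul_zero]
  have ho8 : (P * ρ2 * P) * G1 = 0 := by
    rw [hG1_def, mul_smul_comm]
    rw [hGf1_def, mul_add]
    have t1 : (P * ρ2 * P) * (P * (F1 * P)) = 0 := by
      calc (P * ρ2 * P) * (P * (F1 * P)) = P * (ρ2 * (P * (P * (F1 * P)))) := by
            simp only [Matrix.mul_assoc]
        _ = P * (ρ2 * (P * (F1 * P))) := by rw [hPctx]
        _ = 0 := by rw [hρ2PF1ctx, Matrix.mul_zero]
    have t2 : (P * ρ2 * P) * CT1 = 0 := by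
      rw [hCT1_def]
      calc (P * ρ2 * P) * (P * (D1 * (R2 * (Q2 * (D1 * P)))))
          = P * (ρ2 * (P * (P * (D1 * (R2 * (Q2 * (D1 * P))))))) := by
            simp only [Matrix.mul_assoc]
        _ = P * (ρ2 * (P * (D1 * (R2 * (Q2 * (D1 * P)))))) := by rw [hPctx]
        _ = P * (ρ2 * (P * (D1 * (Q2 * (R2 * (Q2 * (D1 * P))))))) := by
            rw [habs2 (D1 * P)]
        _ = 0 := by
            have e : D1 * (Q2 * (R2 * (Q2 * (D1 * P))))
                = c • (Q2 * (R2 * (Q2 * (D1 * P)))) - F1 * (Q2 * (R2 * (Q2 * (D1 * P)))) := by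
              rw [hD1_def, sub_mul, smul_mul_assoc, Matrix.one_mul]
            rw [e]
            simp only [mul_sub, mul_smul_comm]
            have e2 : ρ2 * (P * (Q2 * (R2 * (Q2 * (D1 * P))))) = 0 := by
              calc ρ2 * (P * (Q2 * (R2 * (Q2 * (D1 * P)))))
                  = ρ2 * ((P * Q2) * (R2 * (Q2 * (D1 * P)))) := by rw [Matrix.mul_assoc]
                _ = 0 := by rw [hPQ2, Matrix.zero_mul, Matrix.mul_zero]
            have e3 : ρ2 * (P * (F1 * (Q2 * (R2 * (Q2 * (D1 * P)))))) = 0 := hρ2PF1ctx _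
            rw [e2, e3]
            simp
    rw [t1, t2, add_zero, smul_zero]
  -- the gen1-based positivity giving the trace inequality for state 1
  have hZ1 : (Q2 + R2 * (Q2 * (D1 * P)))ᴴ * D1 * (Q2 + R2 * (Q2 * (D1 * P)))
      = c • Q2 + Gf1 - F1 := by
    rw [gen1_eq hQ2h hPh hD1h hR2h hAR2 hf22, ← hCT1_def]
    have e1 : Q2 * (D1 * Q2) = c • Q2 - Q2 * (F1 * Q2) := by
      rw [hD1_def, sub_mul, smul_mul_assoc, Matrix.one_mul, mul_sub, mul_smul_comm, hQ2i]
    have e2 : Q2 * (D1 * P) = -(Q2 * (F1 * P)) := by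
      rw [hD1_def, sub_mul, smul_mul_assoc, Matrix.one_mul, mul_sub, mul_smul_comm, hQ2P,
        smul_zero, zero_sub]
    have e3 : P * (D1 * Q2) = -(P * (F1 * Q2)) := by
      rw [hD1_def, sub_mul, smul_mul_assoc, Matrix.one_mul, mul_sub, mul_smul_comm, hPQ2,
        smul_zero, zero_sub]
    have e4 : F1 = Q2 * (F1 * Q2) + Q2 * (F1 * P) + P * (F1 * Q2) + P * (F1 * P) := by
      have h0 : Q2 + P = 1 - Q1 := by rw [← hQsum']; abel
      have hL : (Q2 + P) * F1 = F1 := by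
        rw [h0, sub_mul, Matrix.one_mul, hQ1F1, sub_zero]
      have hRr : F1 * (Q2 + P) = F1 := by
        rw [h0, mul_sub, Matrix.mul_one, hF1Q1, sub_zero]
      calc F1 = (Q2 + P) * (F1 * (Q2 + P)) := by rw [hRr, hL]
        _ = _ := by rw [mul_add F1, mul_add, add_mul, add_mul]; abel
    rw [e1, e2, e3]
    conv_rhs => rw [e4]
    rw [hGf1_def]
    abel
  have hZ2 : (Q1 + R1 * (Q1 * (D2 * P)))ᴴ * D2 * (Q1 + R1 * (Q1 * (D2 * P)))
      = c • Q1 + Gf2 - F2 := by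
    rw [gen1_eq hQ1h hPh hD2h hR1h hAR1 hf21, ← hCT2_def]
    have e1 : Q1 * (D2 * Q1) = c • Q1 - Q1 * (F2 * Q1) := by
      rw [hD2_def, sub_mul, smul_mul_assoc, Matrix.one_mul, mul_sub, mul_smul_comm, hQ1i]
    have e2 : Q1 * (D2 * P) = -(Q1 * (F2 * P)) := by
      rw [hD2_def, sub_mul, smul_mul_assoc, Matrix.one_mul, mul_sub, mul_smul_comm, hQ1P,
        smul_zero, zero_sub]
    have e3 : P * (D2 * Q1) = -(P * (F2 * Q1)) := by
      rw [hD2_def, sub_mul, smul_mul_assoc, Matrix.one_mul, mul_sub, mul_smul_comm, hPQ1,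
        smul_zero, zero_sub]
    have e4 : F2 = Q1 * (F2 * Q1) + Q1 * (F2 * P) + P * (F2 * Q1) + P * (F2 * P) := by
      have h0 : Q1 + P = 1 - Q2 := by rw [← hQsum']; abel
      have hL : (Q1 + P) * F2 = F2 := by
        rw [h0, sub_mul, Matrix.one_mul, hQ2F2, sub_zero]
      have hRr : F2 * (Q1 + P) = F2 := by
        rw [h0, mul_sub, Matrix.mul_one, hF2Q2, sub_zero]
      calc F2 = (Q1 + P) * (F2 * (Q1 + P)) := by rw [hRr, hL]
        _ = _ := by rw [mul_add F2, mul_add, add_mul, add_mul]; abel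
    rw [e1, e2, e3]
    conv_rhs => rw [e4]
    rw [hGf2_def]
    abel
  have hZ1psd : (c • Q2 + Gf1 - F1).PosSemidef := by
    rw [← hZ1]; exact hD1psd.conjTranspose_mul_mul_same _
  have hZ2psd : (c • Q1 + Gf2 - F2).PosSemidef := by
    rw [← hZ2]; exact hD2psd.conjTranspose_mul_mul_same _
  -- trace comparisons
  have trace_sandwich : ∀ ρ G : Mat n, ((P * ρ * P) * G).trace = (ρ * (P * (G * P))).trace := by
    intro ρ G
    calc ((P * ρ * P) * G).trace = (P * (ρ * (P * G))).trace := by simp only [Matrix.mul_assoc]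
      _ = ((ρ * (P * G)) * P).trace := Matrix.trace_mul_comm _ _
      _ = (ρ * (P * (G * P))).trace := by simp only [Matrix.mul_assoc]
  have hGf1inv : P * (Gf1 * P) = Gf1 := by
    rw [hGf1_def, hCT1_def, add_mul, mul_add]
    congr 1
    · calc P * (P * (F1 * P) * P) = P * (P * (F1 * (P * P))) := by simp only [Matrix.mul_assoc]
        _ = P * (F1 * P) := by rw [hPi, hPctx]
    · calc P * (P * (D1 * (R2 * (Q2 * (D1 * P)))) * P)
          = P * (P * (D1 * (R2 * (Q2 * (D1 * (P * P)))))) := by simp only [Matrix.mul_assoc]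
        _ = P * (D1 * (R2 * (Q2 * (D1 * P)))) := by rw [hPi, hPctx]
  have hGf2inv : P * (Gf2 * P) = Gf2 := by
    rw [hGf2_def, hCT2_def, add_mul, mul_add]
    congr 1
    · calc P * (P * (F2 * P) * P) = P * (P * (F2 * (P * P))) := by simp only [Matrix.mul_assoc]
        _ = P * (F2 * P) := by rw [hPi, hPctx]
    · calc P * (P * (D2 * (R1 * (Q1 * (D2 * P)))) * P)
          = P * (P * (D2 * (R1 * (Q1 * (D2 * (P * P)))))) := by simp only [Matrix.mul_assoc]
        _ = P * (D2 * (R1 * (Q1 * (D2 * P)))) := by rw [hPi, hPctx]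
  have htrG1 : (((P * ρ1 * P) * G1).trace).re = s * ((ρ1 * Gf1).trace).re := by
    rw [hG1_def, mul_smul_comm, Matrix.trace_smul, smul_eq_mul]
    rw [trace_sandwich ρ1 Gf1, hGf1inv]
    rw [Complex.mul_re, Complex.ofReal_re, Complex.ofReal_im]
    ring
  have htrG2 : (((P * ρ2 * P) * G2).trace).re = s * ((ρ2 * Gf2).trace).re := by
    rw [hG2_def, mul_smul_comm, Matrix.trace_smul, smul_eq_mul]
    rw [trace_sandwich ρ2 Gf2, hGf2inv]
    rw [Complex.mul_re, Complex.ofReal_re, Complex.ofReal_im]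
    ring
  have hineq1 : ((ρ1 * F1).trace).re
      ≤ (1+ε) * (((ρ1 * Q2).trace).re + (((P * ρ1 * P) * G1).trace).re) := by
    have h0 := trace_psd_mul_re_nonneg hρ1 hZ1psd
    have hexp : (ρ1 * (c • Q2 + Gf1 - F1)).trace
        = c * (ρ1 * Q2).trace + (ρ1 * Gf1).trace - (ρ1 * F1).trace := by
      rw [mul_sub, mul_add, Matrix.trace_sub, Matrix.trace_add, mul_smul_comm,
        Matrix.trace_smul, smul_eq_mul]
    rw [hexp] at h0
    have hre : (c * (ρ1 * Q2).trace + (ρ1 * Gf1).trace - (ρ1 * F1).trace).re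
        = (1+ε) * ((ρ1 * Q2).trace).re + ((ρ1 * Gf1).trace).re - ((ρ1 * F1).trace).re := by
      rw [Complex.sub_re, Complex.add_re, hc_def, Complex.mul_re, Complex.ofReal_re,
        Complex.ofReal_im]
      ring
    rw [hre] at h0
    rw [htrG1]
    have hse : (1+ε) * (s * ((ρ1 * Gf1).trace).re) = ((ρ1 * Gf1).trace).re := by
      rw [hs_def]
      field_simp
    rw [mul_add, hse]
    linarith
  have hineq2 : ((ρ2 * F2).trace).re
      ≤ (1+ε) * (((ρ2 * Q1).trace).re + (((P * ρ2 * P) * G2).trace).re) := by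
    have h0 := trace_psd_mul_re_nonneg hρ2 hZ2psd
    have hexp : (ρ2 * (c • Q1 + Gf2 - F2)).trace
        = c * (ρ2 * Q1).trace + (ρ2 * Gf2).trace - (ρ2 * F2).trace := by
      rw [mul_sub, mul_add, Matrix.trace_sub, Matrix.trace_add, mul_smul_comm,
        Matrix.trace_smul, smul_eq_mul]
    rw [hexp] at h0
    have hre : (c * (ρ2 * Q1).trace + (ρ2 * Gf2).trace - (ρ2 * F2).trace).re
        = (1+ε) * ((ρ2 * Q1).trace).re + ((ρ2 * Gf2).trace).re - ((ρ2 * F2).trace).re := by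
      rw [Complex.sub_re, Complex.add_re, hc_def, Complex.mul_re, Complex.ofReal_re,
        Complex.ofReal_im]
      ring
    rw [hre] at h0
    rw [htrG2]
    have hse : (1+ε) * (s * ((ρ2 * Gf2).trace).re) = ((ρ2 * Gf2).trace).re := by
      rw [hs_def]
      field_simp
    rw [mul_add, hse]
    linarith
  exact ⟨G1, G2, 1 - G1 - G2, hG1psd, hG2psd, hGqpsd, by abel, ho7, ho8, hineq1, hineq2⟩


end AuxLemmas

set_option maxHeartbeats 2000000 in
/-- Reduction Theorem for Orthogonal Subspaces: when the supports of
`ρ1` and `ρ2` intersect trivially and span the whole space, the infimum of the failure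
probability over all USD POVMs for `(ρ1, ρ2)` equals `N` times the infimum of the
failure probability over all USD POVMs for the reduced problem `(ρ1', ρ2')` obtained by
splitting off the mutually orthogonal parts `S1⊥ = support(ρ1)ᗮ ⊓ support(ρ2)` and
`S2⊥ = support(ρ2)ᗮ ⊓ support(ρ1)`. -/
theorem usd_reduction_orthogonal_subspaces {n : ℕ} (ρ1 ρ2 : Mat n)
    (h1 : IsDensity ρ1) (h2 : IsDensity ρ2)
    (p1 p2 : ℝ) (hp1 : 0 < p1) (hp2 : 0 < p2) (hp : p1 + p2 = 1)
    (hdisj : MatSupport ρ1 ⊓ MatSupport ρ2 = ⊥)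
    (hspan : MatSupport ρ1 ⊔ MatSupport ρ2 = ⊤)
    (S1p S2p : Submodule ℂ (EuclideanSpace ℂ (Fin n)))
    (hS1p : S1p = (MatSupport ρ1)ᗮ ⊓ MatSupport ρ2)
    (hS2p : S2p = (MatSupport ρ2)ᗮ ⊓ MatSupport ρ1)
    (P' : Mat n) (hP' : P' = projMat ((S1p ⊔ S2p)ᗮ))
    (N1 N2 : ℝ) (hN1 : N1 = ((ρ1 * P').trace).re) (hN2 : N2 = ((ρ2 * P').trace).re)
    (hN1pos : 0 < N1) (hN2pos : 0 < N2)
    (ρ1' ρ2' : Mat n)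
    (hρ1' : ρ1' = ((N1 : ℂ))⁻¹ • (P' * ρ1 * P'))
    (hρ2' : ρ2' = ((N2 : ℂ))⁻¹ • (P' * ρ2 * P'))
    (N : ℝ) (hN : N = N1 * p1 + N2 * p2)
    (p1' p2' : ℝ) (hp1' : p1' = N1 * p1 / N) (hp2' : p2' = N2 * p2 / N) :
    sInf {q : ℝ | ∃ F1 F2 Fq : Mat n, IsUSD ρ1 ρ2 F1 F2 Fq ∧ q = failQ p1 p2 ρ1 ρ2 Fq} =
      N * sInf {q : ℝ | ∃ F1 F2 Fq : Mat n,
        IsUSD ρ1' ρ2' F1 F2 Fq ∧ q = failQ p1' p2' ρ1' ρ2' Fq} := by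
  obtain ⟨hρ1psd, hρ1tr⟩ := h1
  obtain ⟨hρ2psd, hρ2tr⟩ := h2
  set Q1 : Mat n := projMat S1p with hQ1_def
  set Q2 : Mat n := projMat S2p with hQ2_def
  set V : Submodule ℂ (EuclideanSpace ℂ (Fin n)) := S1p ⊔ S2p with hV_def
  -- subspace orthogonality
  have hS1S2 : S1p ≤ S2pᗮ := by
    rw [hS1p, hS2p]
    exact le_trans inf_le_left (Submodule.orthogonal_le inf_le_right)
  have hS2S1 : S2p ≤ S1pᗮ :=
    le_trans (Submodule.le_orthogonal_orthogonal S2p) (Submodule.orthogonal_le hS1S2)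
  -- projection algebra
  have hQ1h : Q1ᴴ = Q1 := projMat_isHermitian S1p
  have hQ2h : Q2ᴴ = Q2 := projMat_isHermitian S2p
  have hPh : P'ᴴ = P' := by rw [hP']; exact projMat_isHermitian _
  have hQ1i : Q1 * Q1 = Q1 := projMat_mul_self S1p
  have hQ2i : Q2 * Q2 = Q2 := projMat_mul_self S2p
  have hPi : P' * P' = P' := by rw [hP']; exact projMat_mul_self _
  have hQ1psd : Q1.PosSemidef := projMat_posSemidef S1p
  have hQ2psd : Q2.PosSemidef := projMat_posSemidef S2p
  have hQ12 : Q1 * Q2 = 0 := projMat_mul_projMat_of_orthogonal hS2S1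
  have hQ21 : Q2 * Q1 = 0 := projMat_mul_projMat_of_orthogonal hS1S2
  have hQ1P : Q1 * P' = 0 := by
    rw [hP']; exact projMat_mul_projMat_of_orthogonal (Submodule.orthogonal_le le_sup_left)
  have hQ2P : Q2 * P' = 0 := by
    rw [hP']; exact projMat_mul_projMat_of_orthogonal (Submodule.orthogonal_le le_sup_right)
  have hPQ1 : P' * Q1 = 0 := by
    rw [hP']
    exact projMat_mul_projMat_of_orthogonal
      (le_trans le_sup_left (Submodule.le_orthogonal_orthogonal V))
  have hPQ2 : P' * Q2 = 0 := by
    rw [hP']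
    exact projMat_mul_projMat_of_orthogonal
      (le_trans le_sup_right (Submodule.le_orthogonal_orthogonal V))
  have hQsum : Q1 + Q2 + P' = 1 := by
    rw [hQ1_def, hQ2_def, hP', ← projMat_sup_of_orthogonal hS1S2]
    exact projMat_add_orthogonal V
  have hρ1Q1 : ρ1 * Q1 = 0 := by
    rw [hQ1_def]
    exact hermitian_mul_projMat_eq_zero hρ1psd.1 (by rw [hS1p]; exact inf_le_left)
  have hρ2Q2 : ρ2 * Q2 = 0 := by
    rw [hQ2_def]
    exact hermitian_mul_projMat_eq_zero hρ2psd.1 (by rw [hS2p]; exact inf_le_left)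
  -- numeric facts
  have hN0 : 0 < N := by
    rw [hN]
    have := mul_pos hN1pos hp1
    have := mul_pos hN2pos hp2
    linarith
  have hN1ne : (N1 : ℂ) ≠ 0 := by exact_mod_cast hN1pos.ne'
  have hN2ne : (N2 : ℂ) ≠ 0 := by exact_mod_cast hN2pos.ne'
  have hPρ1P : P' * ρ1 * P' = (N1 : ℂ) • ρ1' := by
    rw [hρ1', smul_smul, mul_inv_cancel₀ hN1ne, one_smul]
  have hPρ2P : P' * ρ2 * P' = (N2 : ℂ) • ρ2' := by
    rw [hρ2', smul_smul, mul_inv_cancel₀ hN2ne, one_smul]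
  have hρ1'psd : ρ1'.PosSemidef := by
    rw [hρ1', show ((N1:ℂ))⁻¹ = ((N1⁻¹ : ℝ) : ℂ) by push_cast; ring]
    refine psd_smul_real ?_ (by positivity)
    have h := hρ1psd.mul_mul_conjTranspose_same P'
    rwa [hPh] at h
  have hρ2'psd : ρ2'.PosSemidef := by
    rw [hρ2', show ((N2:ℂ))⁻¹ = ((N2⁻¹ : ℝ) : ℂ) by push_cast; ring]
    refine psd_smul_real ?_ (by positivity)
    have h := hρ2psd.mul_mul_conjTranspose_same P'
    rwa [hPh] at h
  -- the two sets
  set Sfull := {q : ℝ | ∃ F1 F2 Fq : Mat n,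
    IsUSD ρ1 ρ2 F1 F2 Fq ∧ q = failQ p1 p2 ρ1 ρ2 Fq} with hSfull_def
  set Sred := {q : ℝ | ∃ F1 F2 Fq : Mat n,
    IsUSD ρ1' ρ2' F1 F2 Fq ∧ q = failQ p1' p2' ρ1' ρ2' Fq} with hSred_def
  have htriv : ∀ (σ1 σ2 : Mat n), IsUSD σ1 σ2 0 0 1 := by
    intro σ1 σ2
    refine ⟨Matrix.PosSemidef.zero, Matrix.PosSemidef.zero, Matrix.PosSemidef.one, by simp, ?_, ?_⟩
    · rw [Matrix.mul_zero, Matrix.trace_zero]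
    · rw [Matrix.mul_zero, Matrix.trace_zero]
  have hfull_ne : Sfull.Nonempty :=
    ⟨failQ p1 p2 ρ1 ρ2 1, 0, 0, 1, htriv _ _, rfl⟩
  have hred_ne : Sred.Nonempty :=
    ⟨failQ p1' p2' ρ1' ρ2' 1, 0, 0, 1, htriv _ _, rfl⟩
  have hp1'0 : 0 ≤ p1' := by rw [hp1']; positivity
  have hp2'0 : 0 ≤ p2' := by rw [hp2']; positivity
  have hfull_bdd : BddBelow Sfull := by
    refine ⟨0, fun q hq => ?_⟩
    obtain ⟨F1, F2, Fq, hU, rfl⟩ := hq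
    exact add_nonneg (mul_nonneg hp1.le (trace_psd_mul_re_nonneg hρ1psd hU.2.2.1))
      (mul_nonneg hp2.le (trace_psd_mul_re_nonneg hρ2psd hU.2.2.1))
  have hred_bdd : BddBelow Sred := by
    refine ⟨0, fun q hq => ?_⟩
    obtain ⟨F1, F2, Fq, hU, rfl⟩ := hq
    exact add_nonneg (mul_nonneg hp1'0 (trace_psd_mul_re_nonneg hρ1'psd hU.2.2.1))
      (mul_nonneg hp2'0 (trace_psd_mul_re_nonneg hρ2'psd hU.2.2.1))
  -- trace bookkeeping lemmas
  have htrρ1P : ((ρ1 * P').trace).re = N1 := hN1.symm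
  have htrρ2P : ((ρ2 * P').trace).re = N2 := hN2.symm
  have htrρ1Q2 : ((ρ1 * Q2).trace).re = 1 - N1 := by
    have e : ρ1 * Q1 + ρ1 * Q2 + ρ1 * P' = ρ1 := by
      rw [← mul_add, ← mul_add, hQsum, Matrix.mul_one]
    have etr := congrArg (fun M : Mat n => (M.trace).re) e
    simp only [Matrix.trace_add, Complex.add_re] at etr
    rw [hρ1Q1, Matrix.trace_zero] at etr
    simp only [Complex.zero_re, zero_add] at etr
    rw [hρ1tr] at etr
    simp only [Complex.one_re] at etr
    linarith [etr, htrρ1P]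
  have htrρ2Q1 : ((ρ2 * Q1).trace).re = 1 - N2 := by
    have e : ρ2 * Q1 + ρ2 * Q2 + ρ2 * P' = ρ2 := by
      rw [← mul_add, ← mul_add, hQsum, Matrix.mul_one]
    have etr := congrArg (fun M : Mat n => (M.trace).re) e
    simp only [Matrix.trace_add, Complex.add_re] at etr
    rw [hρ2Q2, Matrix.trace_zero] at etr
    simp only [Complex.zero_re, add_zero] at etr
    rw [hρ2tr] at etr
    simp only [Complex.one_re] at etr
    linarith [etr, htrρ2P]
  have htrρ1' : ((ρ1').trace).re = 1 := by
    rw [hρ1', Matrix.trace_smul]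
    have e : (P' * ρ1 * P').trace = (ρ1 * P').trace := by
      calc (P' * ρ1 * P').trace = ((P' * ρ1) * P').trace := by rw [Matrix.mul_assoc]
        _ = (P' * (P' * ρ1)).trace := (Matrix.trace_mul_comm _ _)
        _ = ((P' * P') * ρ1).trace := by rw [Matrix.mul_assoc]
        _ = (P' * ρ1).trace := by rw [hPi]
        _ = (ρ1 * P').trace := Matrix.trace_mul_comm _ _
    rw [e]
    rw [show ((N1:ℂ))⁻¹ = ((N1⁻¹ : ℝ) : ℂ) by push_cast; ring]
    rw [smul_eq_mul, Complex.mul_re, Complex.ofReal_re, Complex.ofReal_im, ← hN1]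
    simp
    field_simp
  have htrρ2' : ((ρ2').trace).re = 1 := by
    rw [hρ2', Matrix.trace_smul]
    have e : (P' * ρ2 * P').trace = (ρ2 * P').trace := by
      calc (P' * ρ2 * P').trace = ((P' * ρ2) * P').trace := by rw [Matrix.mul_assoc]
        _ = (P' * (P' * ρ2)).trace := (Matrix.trace_mul_comm _ _)
        _ = ((P' * P') * ρ2).trace := by rw [Matrix.mul_assoc]
        _ = (P' * ρ2).trace := by rw [hPi]
        _ = (ρ2 * P').trace := Matrix.trace_mul_comm _ _
    rw [e]
    rw [show ((N2:ℂ))⁻¹ = ((N2⁻¹ : ℝ) : ℂ) by push_cast; ring]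
    rw [smul_eq_mul, Complex.mul_re, Complex.ofReal_re, Complex.ofReal_im, ← hN2]
    simp
    field_simp
  have re_mulR : ∀ (r : ℝ) (z : ℂ), (((r:ℂ)) * z).re = r * z.re := fun r z => by
    rw [Complex.mul_re, Complex.ofReal_re, Complex.ofReal_im]
    ring
  -- Direction I : sInf Sfull ≤ N * sInf Sred
  have hdir1 : ∀ q' ∈ Sred, sInf Sfull ≤ N * q' := by
    intro q' hq'
    obtain ⟨G1, G2, Gq, ⟨hG1, hG2, hGq, hGsum, hG2tr, hG1tr⟩, rfl⟩ := hq'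
    have hmem : N * failQ p1' p2' ρ1' ρ2' Gq ∈ Sfull := by
      refine ⟨P' * G1 * P' + Q2, P' * G2 * P' + Q1, P' * Gq * P', ⟨?_, ?_, ?_, ?_, ?_, ?_⟩, ?_⟩
      · refine psd_add ?_ hQ2psd
        have h := hG1.conjTranspose_mul_mul_same P'
        rwa [hPh] at h
      · refine psd_add ?_ hQ1psd
        have h := hG2.conjTranspose_mul_mul_same P'
        rwa [hPh] at h
      · have h := hGq.conjTranspose_mul_mul_same P'
        rwa [hPh] at h
      · have e : P' * G1 * P' + Q2 + (P' * G2 * P' + Q1) + P' * Gq * P'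
            = P' * (G1 + G2 + Gq) * P' + (Q1 + Q2) := by
          noncomm_ring
        rw [e, hGsum, Matrix.mul_one, hPi, ← hQsum]
        abel
      · rw [mul_add, Matrix.trace_add, hρ1Q1, Matrix.trace_zero, add_zero,
          Matrix.mul_assoc P' G2 P', ← trace_sandwich, hPρ1P, smul_mul_assoc,
          Matrix.trace_smul, hG2tr, smul_zero]
      · rw [mul_add, Matrix.trace_add, hρ2Q2, Matrix.trace_zero, add_zero,
          Matrix.mul_assoc P' G1 P', ← trace_sandwich, hPρ2P, smul_mul_assoc,
          Matrix.trace_smul, hG1tr, smul_zero]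
      · have t1 : ((ρ1 * (P' * G1 * P' + Q2 + (P' * G2 * P' + Q1) + P' * Gq * P'))).trace = 0
            → True := fun _ => trivial
        have e1 : ((ρ1 * (P' * Gq * P')).trace).re = N1 * ((ρ1' * Gq).trace).re := by
          rw [Matrix.mul_assoc P' Gq P', ← trace_sandwich, hPρ1P, smul_mul_assoc,
            Matrix.trace_smul, smul_eq_mul, re_mulR]
        have e2 : ((ρ2 * (P' * Gq * P')).trace).re = N2 * ((ρ2' * Gq).trace).re := by
          rw [Matrix.mul_assoc P' Gq P', ← trace_sandwich, hPρ2P, smul_mul_assoc,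
            Matrix.trace_smul, smul_eq_mul, re_mulR]
        show N * failQ p1' p2' ρ1' ρ2' Gq = failQ p1 p2 ρ1 ρ2 (P' * Gq * P')
        unfold failQ
        rw [e1, e2, hp1', hp2']
        field_simp
    have := csInf_le hfull_bdd hmem
    exact this
  have hIneq1 : sInf Sfull ≤ N * sInf Sred := by
    have hdiv : sInf Sfull / N ≤ sInf Sred := by
      apply le_csInf hred_ne
      intro q' hq'
      rw [div_le_iff₀ hN0]
      calc sInf Sfull ≤ N * q' := hdir1 q' hq'
        _ = q' * N := mul_comm _ _
    calc sInf Sfull = (sInf Sfull / N) * N := by field_simp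
      _ ≤ sInf Sred * N := mul_le_mul_of_nonneg_right hdiv hN0.le
      _ = N * sInf Sred := mul_comm _ _
  -- Direction II : N * sInf Sred ≤ sInf Sfull
  have hIneq2 : N * sInf Sred ≤ sInf Sfull := by
    apply le_csInf hfull_ne
    rintro q ⟨F1, F2, Fq, ⟨hF1, hF2, hFq, hFsum, htr12, htr21⟩, rfl⟩
    have hρ1F2 : ρ1 * F2 = 0 := psd_mul_eq_zero_of_trace hρ1psd hF2 htr12
    have hρ2F1 : ρ2 * F1 = 0 := psd_mul_eq_zero_of_trace hρ2psd hF1 htr21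
    have hF2ρ1 : F2 * ρ1 = 0 := by
      have := congrArg conjTranspose hρ1F2
      rwa [conjTranspose_mul, hρ1psd.1, hF2.1, conjTranspose_zero] at this
    have hF1ρ2 : F1 * ρ2 = 0 := by
      have := congrArg conjTranspose hρ2F1
      rwa [conjTranspose_mul, hρ2psd.1, hF1.1, conjTranspose_zero] at this
    have hF2Q2 : F2 * Q2 = 0 := by
      rw [hQ2_def]
      exact mul_projMat_eq_zero_of_absorb hF2ρ1 (by rw [hS2p]; exact inf_le_right)
    have hF1Q1 : F1 * Q1 = 0 := by
      rw [hQ1_def]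
      exact mul_projMat_eq_zero_of_absorb hF1ρ2 (by rw [hS1p]; exact inf_le_right)
    set a1 : ℝ := ((ρ1 * F1).trace).re with ha1_def
    set a2 : ℝ := ((ρ2 * F2).trace).re with ha2_def
    have ha1nn : 0 ≤ a1 := trace_psd_mul_re_nonneg hρ1psd hF1
    have ha2nn : 0 ≤ a2 := trace_psd_mul_re_nonneg hρ2psd hF2
    have hq_eq : failQ p1 p2 ρ1 ρ2 Fq = 1 - (p1*a1 + p2*a2) := by
      have e1 : ((ρ1 * Fq).trace).re = 1 - a1 := by
        have e : ρ1 * F1 + ρ1 * F2 + ρ1 * Fq = ρ1 := by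
          rw [← mul_add, ← mul_add, hFsum, Matrix.mul_one]
        have etr := congrArg (fun M : Mat n => (M.trace).re) e
        simp only [Matrix.trace_add, Complex.add_re] at etr
        rw [htr12] at etr
        rw [hρ1tr] at etr
        simp only [Complex.zero_re, add_zero, Complex.one_re] at etr
        linarith [etr]
      have e2 : ((ρ2 * Fq).trace).re = 1 - a2 := by
        have e : ρ2 * F1 + ρ2 * F2 + ρ2 * Fq = ρ2 := by
          rw [← mul_add, ← mul_add, hFsum, Matrix.mul_one]
        have etr := congrArg (fun M : Mat n => (M.trace).re) e
        simp only [Matrix.trace_add, Complex.add_re] at etr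
        rw [htr21] at etr
        rw [hρ2tr] at etr
        simp only [Complex.zero_re, zero_add, Complex.one_re] at etr
        linarith [etr]
      unfold failQ
      rw [e1, e2]
      nlinarith [hp]
    have hq0 : 0 ≤ failQ p1 p2 ρ1 ρ2 Fq :=
      add_nonneg (mul_nonneg hp1.le (trace_psd_mul_re_nonneg hρ1psd hFq))
        (mul_nonneg hp2.le (trace_psd_mul_re_nonneg hρ2psd hFq))
    have hq1 : failQ p1 p2 ρ1 ρ2 Fq ≤ 1 := by
      rw [hq_eq]
      nlinarith [mul_nonneg hp1.le ha1nn, mul_nonneg hp2.le ha2nn]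
    have hkey : ∀ ε : ℝ, 0 < ε →
        N * sInf Sred ≤ 1 - (1 - failQ p1 p2 ρ1 ρ2 Fq)/(1+ε) := by
      intro ε hε
      have hη : (0:ℝ) < 1 + ε := by linarith
      obtain ⟨G1, G2, Gq, hG1, hG2, hGq, hGsum, ho7, ho8, hi1, hi2⟩ :=
        core_reduction hε hρ1psd hρ2psd hF1 hF2 hFq hFsum hQ1h hQ2h hPh hQ1i hQ2i hPi
          hQ1psd hQ2psd hQ12 hQ21 hQ1P hPQ1 hQ2P hPQ2 hQsum hρ1F2 hρ2F1 hρ1Q1 hρ2Q2 hF2Q2 hF1Q1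
      have hzero1 : (ρ1' * G2).trace = 0 := by
        rw [hρ1', smul_mul_assoc, ho7, smul_zero, Matrix.trace_zero]
      have hzero2 : (ρ2' * G1).trace = 0 := by
        rw [hρ2', smul_mul_assoc, ho8, smul_zero, Matrix.trace_zero]
      have hUSD' : IsUSD ρ1' ρ2' G1 G2 Gq := ⟨hG1, hG2, hGq, hGsum, hzero1, hzero2⟩
      have hmem : failQ p1' p2' ρ1' ρ2' Gq ∈ Sred := ⟨G1, G2, Gq, hUSD', rfl⟩
      set y1 : ℝ := ((ρ1' * G1).trace).re with hy1_def
      set y2 : ℝ := ((ρ2' * G2).trace).re with hy2_def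
      have ht1 : (((P' * ρ1 * P') * G1).trace).re = N1 * y1 := by
        rw [hPρ1P, smul_mul_assoc, Matrix.trace_smul, smul_eq_mul, re_mulR]
      have ht2 : (((P' * ρ2 * P') * G2).trace).re = N2 * y2 := by
        rw [hPρ2P, smul_mul_assoc, Matrix.trace_smul, smul_eq_mul, re_mulR]
      have hredq : failQ p1' p2' ρ1' ρ2' Gq = p1' * (1 - y1) + p2' * (1 - y2) := by
        have e1 : ((ρ1' * Gq).trace).re = 1 - y1 := by
          have e : ρ1' * G1 + ρ1' * G2 + ρ1' * Gq = ρ1' := by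
            rw [← mul_add, ← mul_add, hGsum, Matrix.mul_one]
          have etr := congrArg (fun M : Mat n => (M.trace).re) e
          simp only [Matrix.trace_add, Complex.add_re] at etr
          rw [hzero1] at etr
          simp only [Complex.zero_re, add_zero] at etr
          rw [htrρ1'] at etr
          linarith [etr]
        have e2 : ((ρ2' * Gq).trace).re = 1 - y2 := by
          have e : ρ2' * G1 + ρ2' * G2 + ρ2' * Gq = ρ2' := by
            rw [← mul_add, ← mul_add, hGsum, Matrix.mul_one]
          have etr := congrArg (fun M : Mat n => (M.trace).re) e
          simp only [Matrix.trace_add, Complex.add_re] at etr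
          rw [hzero2] at etr
          simp only [Complex.zero_re, zero_add] at etr
          rw [htrρ2'] at etr
          linarith [etr]
        unfold failQ
        rw [e1, e2]
      have hNq : N * failQ p1' p2' ρ1' ρ2' Gq = N1*p1*(1-y1) + N2*p2*(1-y2) := by
        rw [hredq, hp1', hp2']
        field_simp
      have hi1' : a1 ≤ (1+ε) * ((1 - N1) + N1 * y1) := by
        rw [← htrρ1Q2, ← ht1]
        exact hi1
      have hi2' : a2 ≤ (1+ε) * ((1 - N2) + N2 * y2) := by
        rw [← htrρ2Q1, ← ht2]
        exact hi2
      have hfin : N * failQ p1' p2' ρ1' ρ2' Gq ≤ 1 - (1 - failQ p1 p2 ρ1 ρ2 Fq)/(1+ε) := by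
        rw [hNq, hq_eq]
        have hpe : (p1 + p2) * (1+ε) = 1+ε := by rw [hp]; ring
        have hgoal : (p1*a1 + p2*a2)/(1+ε) ≤ 1 - (N1*p1*(1-y1) + N2*p2*(1-y2)) := by
          rw [div_le_iff₀ hη]
          nlinarith [mul_le_mul_of_nonneg_left hi1' hp1.le,
            mul_le_mul_of_nonneg_left hi2' hp2.le, hpe]
        have e : (1 : ℝ) - (1 - (p1*a1 + p2*a2)) = p1*a1 + p2*a2 := by ring
        rw [e]
        linarith [hgoal]
      calc N * sInf Sred ≤ N * failQ p1' p2' ρ1' ρ2' Gq :=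
            mul_le_mul_of_nonneg_left (csInf_le hred_bdd hmem) hN0.le
        _ ≤ _ := hfin
    by_contra hcon
    push_neg at hcon
    have hstep : ∀ ε : ℝ, 0 < ε → N * sInf Sred ≤ failQ p1 p2 ρ1 ρ2 Fq + ε := by
      intro ε hε
      have h := hkey ε hε
      have hη : (0:ℝ) < 1 + ε := by linarith
      have hb : 1 - (1 - failQ p1 p2 ρ1 ρ2 Fq)/(1+ε) ≤ failQ p1 p2 ρ1 ρ2 Fq + ε := by
        rw [sub_le_iff_le_add]
        rw [show failQ p1 p2 ρ1 ρ2 Fq + ε + (1 - failQ p1 p2 ρ1 ρ2 Fq)/(1+ε)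
            = failQ p1 p2 ρ1 ρ2 Fq + ε + (1 - failQ p1 p2 ρ1 ρ2 Fq)/(1+ε) from rfl]
        have hd : (1 - failQ p1 p2 ρ1 ρ2 Fq)/(1+ε) ≥ (1 - failQ p1 p2 ρ1 ρ2 Fq) - ε := by
          rw [ge_iff_le, sub_le_iff_le_add, div_add' _ _ _ hη.ne', le_div_iff₀ hη]
          nlinarith [hq0, hq1]
        linarith
      linarith
    have hfinal := hstep ((N * sInf Sred - failQ p1 p2 ρ1 ρ2 Fq)/2) (by linarith)
    linarith
  linarith [hIneq1, hIneq2]
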